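/- arXiv:1910.08095 — 2 statements merged into one kernel-verified Lean document; each statement's English description precedes it below -/
import Mathlib

section
/- Every automorphism of order 7 of the Heawood graph fixes no vertex, and every orbit of its action on the 21 edges of the Heawood graph has size exactly 7. -/
/-!
An automorphism of prime order `p` that fixes a vertex `x` permutes the neighbours of `x` in
orbits of size `1` or `p`. The Heawood graph is cubic and `7 > 3`, so an automorphism of order 7
fixing a vertex fixes its neighbours, hence, by connectedness, everything: it would be trivial.
So an automorphism `α` of order 7 moves every vertex. It then moves every edge as well, since it
could only fix an edge by swapping its ends, and then `α = α⁷ * (α²)⁻³` would fix them.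
As `⟨α⟩` has prime order 7, every edge orbit has exactly 7 elements.
-/

/-- The Heawood graph `C₁₄` on vertex set `ZMod 14`: distinct vertices `i` and `j` are
adjacent iff `j = i ± 1`, or `i` is even and `j = i + 5`, or `i` is odd and `j = i - 5`
(LCF notation `[5, -5]⁷`). -/
def heawood : SimpleGraph (ZMod 14) where
  Adj i j := i ≠ j ∧ (j = i + 1 ∨ j = i - 1 ∨
    (i.val % 2 = 0 ∧ j = i + 5) ∨ (i.val % 2 = 1 ∧ j = i - 5))
  symm := ⟨by intro i j h; revert i j; decide⟩
  loopless := ⟨by intro i h; revert i h; decide⟩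

instance : DecidableRel heawood.Adj := fun i j =>
  decidable_of_iff (i ≠ j ∧ (j = i + 1 ∨ j = i - 1 ∨
    (i.val % 2 = 0 ∧ j = i + 5) ∨ (i.val % 2 = 1 ∧ j = i - 5))) Iff.rfl

instance Sym2.instMulAction {M α : Type*} [Monoid M] [MulAction M α] :
    MulAction M (Sym2 α) where
  smul m := Sym2.map (m • ·)
  one_smul e := by
    change Sym2.map _ e = e
    simp only [one_smul, Sym2.map_id', id_eq]
  mul_smul m n e := by
    change Sym2.map _ e = Sym2.map _ (Sym2.map _ e)
    simp only [Sym2.map_map, Function.comp_def, mul_smul]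

namespace MulAction

open Function

variable {G X : Type*} [Group G] [MulAction G X]

lemma orbit_zpowers_eq (g : G) (x : X) :
    orbit (Subgroup.zpowers g) x = {y | ∃ k : ℤ, y = g ^ k • x} := by
  ext y
  simp only [mem_orbit_iff, Subgroup.exists_zpowers, Subgroup.smul_def, Set.mem_ofPred_eq,
    eq_comm]

lemma ncard_orbit_zpowers_eq_minimalPeriod (g : G) (x : X) :
    (orbit (Subgroup.zpowers g) x).ncard = minimalPeriod (g • ·) x := by
  rw [← Nat.card_coe_set_eq, Nat.card_congr (orbitZPowersEquiv g x), Nat.card_zmod]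

lemma ncard_orbit_zpowers_of_pow_prime_eq_one {g : G} {p : ℕ} (hp : p.Prime) (hg : g ^ p = 1)
    {x : X} (hx : g • x ≠ x) : (orbit (Subgroup.zpowers g) x).ncard = p := by
  have hper : IsPeriodicPt (g • ·) p x := by
    simp only [IsPeriodicPt, IsFixedPt, smul_iterate, hg, one_smul]
  rw [ncard_orbit_zpowers_eq_minimalPeriod]
  refine ((Nat.dvd_prime hp).mp hper.minimalPeriod_dvd).resolve_left fun h1 => hx ?_
  exact minimalPeriod_eq_one_iff_isFixedPt.mp h1

lemma smul_sym2_ne {g : G} {p : ℕ} (hp : Odd p) (hg : g ^ p = 1) (hfix : ∀ x : X, g • x ≠ x)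
    {e : Sym2 X} (he : ¬ e.IsDiag) : g • e ≠ e := by
  induction e with
  | h u v =>
  intro hgu
  change s(g • u, g • v) = s(u, v) at hgu
  rcases Sym2.eq_iff.mp hgu with ⟨hu, -⟩ | ⟨huv, hvu⟩
  · exact hfix u hu
  · obtain ⟨k, rfl⟩ := hp
    have h2 : g ^ 2 ∈ stabilizer G u := by
      rw [mem_stabilizer_iff, pow_two, mul_smul, huv, hvu]
    have hk : (g ^ 2) ^ k • u = u := Subgroup.pow_mem _ h2 k
    apply hfix u
    calc g • u = g • (g ^ 2) ^ k • u := by rw [hk]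
      _ = g ^ (2 * k + 1) • u := by rw [← mul_smul, ← pow_mul, pow_succ']
      _ = u := by rw [hg, one_smul]

end MulAction

namespace SimpleGraph

open MulAction

lemma connected_of_forall_adj_add_one {n : ℕ} [NeZero n] {G : SimpleGraph (ZMod n)}
    (h : ∀ i, G.Adj i (i + 1)) : G.Connected := by
  have hreach : ∀ k : ℕ, G.Reachable 0 k := by
    intro k
    induction k with
    | zero => simp
    | succ k ih => simpa only [Nat.cast_succ] using ih.trans (h k).reachable
  refine G.connected_iff_exists_forall_reachable.mpr ⟨0, fun i => ?_⟩
  simpa only [ZMod.natCast_zmod_val] using hreach i.val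

variable {V : Type*} {G : SimpleGraph V}

lemma Iso.apply_eq_of_adj_of_apply_eq [G.LocallyFinite] {g : G ≃g G} {p : ℕ} (hp : p.Prime)
    (hg : g ^ p = 1) (hdeg : ∀ v, G.degree v < p) {x y : V} (hxy : G.Adj x y) (hx : g x = x) :
    g y = y := by
  by_contra hy
  have horbit : orbit (Subgroup.zpowers g) y ⊆ G.neighborSet x := by
    rw [orbit_zpowers_eq]
    rintro _ ⟨k, rfl⟩
    have hxk : (g ^ k) • x = x := Subgroup.zpow_mem (stabilizer _ x) (show g • x = x from hx) k
    simpa only [mem_neighborSet, ← RelIso.smul_def, hxk] using (g ^ k).map_rel_iff.mpr hxy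
  have := Set.ncard_le_ncard horbit (G.neighborSet x).toFinite
  rw [ncard_orbit_zpowers_of_pow_prime_eq_one hp hg hy, ← Nat.card_coe_set_eq,
    Nat.card_eq_fintype_card, card_neighborSet_eq_degree] at this
  exact (hdeg x).not_ge this

lemma Preconnected.eq_one_of_iso_apply_eq [G.LocallyFinite] (hG : G.Preconnected)
    {g : G ≃g G} {p : ℕ} (hp : p.Prime) (hg : g ^ p = 1) (hdeg : ∀ v, G.degree v < p) {x : V}
    (hx : g x = x) : g = 1 := by
  have hwalk : ∀ {u v : V}, G.Walk u v → g u = u → g v = v := by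
    intro u v w
    induction w with
    | nil => exact id
    | cons hadj _ ih => exact fun hu => ih (Iso.apply_eq_of_adj_of_apply_eq hp hg hdeg hadj hu)
  exact RelIso.ext fun v => hwalk (hG x v).some hx

lemma Preconnected.iso_apply_ne_of_orderOf_eq_prime [G.LocallyFinite] (hG : G.Preconnected)
    {g : G ≃g G} {p : ℕ} (hp : p.Prime) (hg : orderOf g = p) (hdeg : ∀ v, G.degree v < p)
    (v : V) : g v ≠ v := fun hv => by
  have := hG.eq_one_of_iso_apply_eq hp (hg ▸ pow_orderOf_eq_one g) hdeg hv
  rw [this, orderOf_one] at hg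
  exact hp.one_lt.ne hg

end SimpleGraph

lemma heawood_connected : heawood.Connected :=
  SimpleGraph.connected_of_forall_adj_add_one <| by decide

lemma heawood_degree (v : ZMod 14) : heawood.degree v = 3 := by
  revert v; decide

/-- Every automorphism of order 7 of the Heawood graph fixes no vertex, and every orbit
of its action on the edges of the Heawood graph has size exactly 7. -/
theorem heawood_order_seven_vertex_and_edge_orbits (α : heawood ≃g heawood)
    (hα : orderOf α = 7) :
    (∀ v : ZMod 14, α v ≠ v) ∧
      ∀ e ∈ heawood.edgeSet,
        {f : Sym2 (ZMod 14) | ∃ k : ℤ, f = Sym2.map ⇑(α ^ k) e}.ncard = 7 := by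
  have h7 : α ^ 7 = 1 := hα ▸ pow_orderOf_eq_one α
  have hfix : ∀ v : ZMod 14, α v ≠ v :=
    heawood_connected.preconnected.iso_apply_ne_of_orderOf_eq_prime Nat.prime_seven hα
      fun v => (heawood_degree v).trans_lt (by norm_num)
  refine ⟨hfix, fun e he => ?_⟩
  have hmove : α • e ≠ e :=
    MulAction.smul_sym2_ne ⟨3, rfl⟩ h7 hfix (heawood.not_isDiag_of_mem_edgeSet he)
  rw [← MulAction.ncard_orbit_zpowers_of_pow_prime_eq_one Nat.prime_seven h7 hmove,
    MulAction.orbit_zpowers_eq]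
  rfl
end

section
/- If an automorphism of the Heawood graph has order 2 and setwise fixes some 12-cycle or some 14-cycle, then it fixes no vertex of the Heawood graph. -/
/-- The set of `n`-cycles of a graph `G`, each cycle recorded as its edge set (so that
cycles are counted as subgraphs, i.e. up to choice of starting vertex and direction). -/
def cycleEdgeSets {V : Type*} [DecidableEq V] (G : SimpleGraph V) (n : ℕ) :
    Set (Finset (Sym2 V)) :=
  {s | ∃ (v : V) (w : G.Walk v v), w.IsCycle ∧ w.length = n ∧ w.edges.toFinset = s}

/-!
An automorphism of the Heawood graph is determined by the image of the path `0, 1, 2, 3, 4`,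
since every other vertex is a common neighbour or the third neighbour of vertices already
placed. Running through the possible images shows that an involution with a fixed vertex
fixes exactly six vertices (it is an elation of the Fano plane: it fixes the three points of
its axis and the three lines through its centre).

An automorphism of a cycle is a rotation or a reflection, so once it fixes three vertices of
the cycle it fixes all of them. An invariant 12- or 14-cycle misses at most two vertices, so
it contains at least four of the six fixed vertices; hence it is fixed pointwise, which gives
at least twelve fixed vertices.
-/

open Finset Function

namespace ZMod

variable {n : ℕ} [NeZero n]

theorem eq_of_neg_eq_self {a b : ZMod n} (ha : -a = a) (hb : -b = b) (ha₀ : a ≠ 0)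
    (hb₀ : b ≠ 0) : a = b := by
  have ha' := ((neg_eq_self_iff a).1 ha).resolve_left ha₀
  have hb' := ((neg_eq_self_iff b).1 hb).resolve_left hb₀
  exact val_injective n (by omega)

theorem add_mul_eq_self_of_three {c ε : ZMod n} (hε : ε = 1 ∨ ε = -1) {i j k : ZMod n}
    (hij : i ≠ j) (hik : i ≠ k) (hjk : j ≠ k) (hi : c + ε * i = i) (hj : c + ε * j = j)
    (hk : c + ε * k = k) (x : ZMod n) : c + ε * x = x := by
  rcases hε with rfl | rfl
  · rw [show c = 0 by linear_combination hi, zero_add, one_mul]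
  · have hjk' : i - j = i - k :=
      eq_of_neg_eq_self (by linear_combination hi - hj) (by linear_combination hi - hk)
        (sub_ne_zero.2 hij) (sub_ne_zero.2 hik)
    exact absurd (by linear_combination -hjk') hjk

end ZMod

section PreservesCycle

variable {V : Type*} {n : ℕ}

def PreservesCycle (U : ZMod n → V) (σ : V → V) : Prop :=
  ∀ i, ∃ j, s(σ (U i), σ (U (i + 1))) = s(U j, U (j + 1))

variable {U : ZMod n → V} {σ : V → V}

theorem PreservesCycle.apply_add_one (h : PreservesCycle U σ) (hU : Injective U)
    {i a : ZMod n} (hi : σ (U i) = U a) :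
    σ (U (i + 1)) = U (a + 1) ∨ σ (U (i + 1)) = U (a - 1) := by
  obtain ⟨j, hj⟩ := h i
  rcases Sym2.eq_iff.1 hj with ⟨h₀, h₁⟩ | ⟨h₀, h₁⟩
  · rw [h₁, hU (hi.symm.trans h₀)]
    exact .inl rfl
  · rw [h₁, hU (hi.symm.trans h₀), add_sub_cancel_right]
    exact .inr rfl

theorem PreservesCycle.exists_eq_add_mul [NeZero n] (h : PreservesCycle U σ)
    (hn : (2 : ZMod n) ≠ 0) (hU : Injective U) (hσ : Injective σ) :
    ∃ c ε : ZMod n, (ε = 1 ∨ ε = -1) ∧ ∀ i, σ (U i) = U (c + ε * i) := by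
  obtain ⟨c, hc⟩ : ∃ c, σ (U 0) = U c := by
    obtain ⟨j, hj⟩ := h 0
    rcases Sym2.eq_iff.1 hj with ⟨h, -⟩ | ⟨h, -⟩ <;> exact ⟨_, h⟩
  obtain ⟨ε, hε, hc₁⟩ : ∃ ε : ZMod n, (ε = 1 ∨ ε = -1) ∧ σ (U 1) = U (c + ε) := by
    rcases h.apply_add_one hU hc with h | h <;> rw [zero_add] at h
    exacts [⟨1, .inl rfl, h⟩, ⟨-1, .inr rfl, by rw [h, sub_eq_add_neg]⟩]
  have key (k : ℕ) : σ (U k) = U (c + ε * k) ∧ σ (U (k + 1)) = U (c + ε * (k + 1)) := by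
    induction k with
    | zero => simpa using ⟨hc, hc₁⟩
    | succ k ih =>
      push_cast
      refine ⟨ih.2, ?_⟩
      have hnext : σ (U (k + 1 + 1)) = U (c + ε * (k + 1 + 1)) ∨
          σ (U (k + 1 + 1)) = U (c + ε * k) := by
        rcases hε with rfl | rfl <;> rcases h.apply_add_one hU ih.2 with h | h <;> rw [h]
        exacts [.inl (by ring_nf), .inr (by ring_nf), .inr (by ring_nf), .inl (by ring_nf)]
      refine hnext.resolve_right fun h ↦ hn ?_
      linear_combination hU (hσ (h.trans ih.1.symm))
  refine ⟨c, ε, hε, fun i ↦ ?_⟩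
  simpa using (key i.val).1

theorem PreservesCycle.apply_eq_self_of_three [NeZero n] (h : PreservesCycle U σ)
    (hn : (2 : ZMod n) ≠ 0) (hU : Injective U) (hσ : Injective σ) {i j k : ZMod n}
    (hij : i ≠ j) (hik : i ≠ k) (hjk : j ≠ k) (hi : σ (U i) = U i) (hj : σ (U j) = U j)
    (hk : σ (U k) = U k) (x : ZMod n) : σ (U x) = U x := by
  obtain ⟨c, ε, hε, hσU⟩ := h.exists_eq_add_mul hn hU hσ
  rw [hσU] at hi hj hk ⊢
  exact congrArg U (ZMod.add_mul_eq_self_of_three hε hij hik hjk (hU hi) (hU hj) (hU hk) x)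

end PreservesCycle

namespace SimpleGraph.Walk

variable {V : Type*} {G : SimpleGraph V} {u : V} {w : G.Walk u u}

theorem getVert_val_add_one [NeZero w.length] (i : ZMod w.length) :
    w.getVert (i + 1).val = w.getVert (i.val + 1) := by
  have hval : (i + 1).val = (i.val + 1) % w.length := by
    rw [ZMod.val_add, ZMod.val_one_eq_one_mod, Nat.add_mod_mod]
  rcases (show i.val + 1 ≤ w.length from i.val_lt).lt_or_eq with h | h
  · rw [hval, Nat.mod_eq_of_lt h]
  · rw [hval, h, Nat.mod_self, getVert_zero, getVert_length]

theorem mem_edges_iff_exists_zmod [NeZero w.length] {e : Sym2 V} :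
    e ∈ w.edges ↔ ∃ i : ZMod w.length, e = s(w.getVert i.val, w.getVert (i + 1).val) := by
  induction e using Sym2.ind with
  | h x y =>
    simp only [getVert_val_add_one, mk_mem_edges_iff_exists, eq_comm (a := s(x, y))]
    constructor
    · rintro ⟨i, hi, h⟩
      refine ⟨i, ?_⟩
      rwa [ZMod.val_cast_of_lt hi]
    · rintro ⟨i, h⟩
      exact ⟨i.val, i.val_lt, h⟩

theorem mem_support_iff_exists_zmod [NeZero w.length] {x : V} :
    x ∈ w.support ↔ ∃ i : ZMod w.length, w.getVert i.val = x := by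
  rw [mem_support_iff_exists_getVert]
  constructor
  · rintro ⟨m, rfl, hm⟩
    rcases hm.lt_or_eq with hm | rfl
    · exact ⟨m, by rw [ZMod.val_cast_of_lt hm]⟩
    · exact ⟨0, by rw [ZMod.val_zero, getVert_zero, getVert_length]⟩
  · rintro ⟨i, rfl⟩
    exact ⟨i.val, rfl, i.val_lt.le⟩

theorem IsCycle.injective_getVert_val [NeZero w.length] (hw : w.IsCycle) :
    Injective fun i : ZMod w.length ↦ w.getVert i.val := fun i j h ↦
  ZMod.val_injective _ <| hw.getVert_injOn' (by have := i.val_lt; simp; omega)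
    (by have := j.val_lt; simp; omega) h

theorem IsCycle.card_support_toFinset [DecidableEq V] (hw : w.IsCycle) :
    #w.support.toFinset = w.length := by
  rw [← w.cons_tail_support, List.toFinset_cons,
    insert_eq_of_mem (List.mem_toFinset.2 (end_mem_tail_support hw.not_nil)),
    List.toFinset_card_of_nodup hw.support_nodup, List.length_tail, length_support,
    Nat.add_sub_cancel]

theorem IsCycle.apply_eq_self_of_two_lt_card_fixed [DecidableEq V] (hw : w.IsCycle)
    {σ : V → V} (hσ : Injective σ) (hmap : ∀ e ∈ w.edges, e.map σ ∈ w.edges)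
    (hfix : 2 < #{x ∈ w.support.toFinset | σ x = x}) {x : V} (hx : x ∈ w.support) :
    σ x = x := by
  have hlen := hw.three_le_length
  have : NeZero w.length := ⟨by omega⟩
  have hn : (2 : ZMod w.length) ≠ 0 := by
    rw [← Nat.cast_two, Ne, ZMod.natCast_eq_zero_iff]
    exact fun h ↦ absurd (Nat.le_of_dvd two_pos h) (by omega)
  have hmapU : PreservesCycle (fun i : ZMod w.length ↦ w.getVert i.val) σ := fun i ↦ by
    rw [← Sym2.map_mk, ← mem_edges_iff_exists_zmod]
    exact hmap _ (mem_edges_iff_exists_zmod.2 ⟨i, rfl⟩)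
  obtain ⟨a, ha, b, hb, c, hc, hab, hac, hbc⟩ := Finset.two_lt_card.1 hfix
  simp only [Finset.mem_filter, List.mem_toFinset] at ha hb hc
  obtain ⟨i, rfl⟩ := mem_support_iff_exists_zmod.1 ha.1
  obtain ⟨j, rfl⟩ := mem_support_iff_exists_zmod.1 hb.1
  obtain ⟨k, rfl⟩ := mem_support_iff_exists_zmod.1 hc.1
  obtain ⟨y, rfl⟩ := mem_support_iff_exists_zmod.1 hx
  have hne {i j : ZMod w.length} (h : w.getVert i.val ≠ w.getVert j.val) : i ≠ j :=
    fun hij ↦ h (hij ▸ rfl)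
  exact hmapU.apply_eq_self_of_three hn hw.injective_getVert_val hσ
    (hne hab) (hne hac) (hne hbc) ha.2 hb.2 hc.2 y

theorem IsCycle.length_le_card_fixed [Fintype V] [DecidableEq V] (hw : w.IsCycle)
    {σ : V → V} (hσ : Injective σ) (hmap : ∀ e ∈ w.edges, e.map σ ∈ w.edges)
    (hcard : Fintype.card V + 3 ≤ w.length + #{x | σ x = x}) :
    w.length ≤ #{x | σ x = x} := by
  have hS := hw.card_support_toFinset
  -- at most `card V - length` fixed vertices lie off the cycle
  have hfix : 2 < #{x ∈ w.support.toFinset | σ x = x} := by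
    have hunion := card_union_add_card_inter w.support.toFinset {x | σ x = x}
    rw [inter_filter, inter_univ] at hunion
    have := card_le_univ (w.support.toFinset ∪ ({x | σ x = x} : Finset V))
    omega
  rw [← hS]
  exact card_le_card fun x hx ↦ mem_filter.2
    ⟨mem_univ x, hw.apply_eq_self_of_two_lt_card_fixed hσ hmap hfix (List.mem_toFinset.1 hx)⟩

end SimpleGraph.Walk

namespace Heawood

instance : DecidableRel heawood.Adj := fun i j ↦
  inferInstanceAs (Decidable (i ≠ j ∧ (j = i + 1 ∨ j = i - 1 ∨
    (i.val % 2 = 0 ∧ j = i + 5) ∨ (i.val % 2 = 1 ∧ j = i - 5))))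

def nbrs (x : ZMod 14) : List (ZMod 14) :=
  [x + 1, x - 1, if x.val % 2 = 0 then x + 5 else x - 5]

theorem adj_iff_mem_nbrs : ∀ x y : ZMod 14, heawood.Adj x y ↔ y ∈ nbrs x := by
  decide

def commonNbr (x y : ZMod 14) : ZMod 14 :=
  ((nbrs x).find? (heawood.Adj · y)).getD x

def thirdNbr (x a b : ZMod 14) : ZMod 14 :=
  ((nbrs x).find? fun c ↦ c ≠ a ∧ c ≠ b).getD x

-- the Heawood graph has girth 6, so common neighbours are unique
theorem commonNbr_eq : ∀ x c y : ZMod 14, heawood.Adj x c → heawood.Adj c y → x ≠ y →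
    commonNbr x y = c := by
  decide

theorem thirdNbr_eq : ∀ x a b c : ZMod 14, heawood.Adj x a → heawood.Adj x b →
    heawood.Adj x c → a ≠ b → a ≠ c → b ≠ c → thirdNbr x a b = c := by
  decide

section Automorphism

variable (α : heawood ≃g heawood) {x y c : ZMod 14}

theorem commonNbr_apply (hxc : heawood.Adj x c) (hcy : heawood.Adj c y) (hxy : x ≠ y) :
    commonNbr (α x) (α y) = α c :=
  commonNbr_eq _ _ _ (α.map_adj_iff.2 hxc) (α.map_adj_iff.2 hcy) (α.injective.ne hxy)

theorem thirdNbr_apply {a b : ZMod 14} (hxa : heawood.Adj x a) (hxb : heawood.Adj x b)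
    (hxc : heawood.Adj x c) (hab : a ≠ b) (hac : a ≠ c) (hbc : b ≠ c) :
    thirdNbr (α x) (α a) (α b) = α c :=
  thirdNbr_eq _ _ _ _ (α.map_adj_iff.2 hxa) (α.map_adj_iff.2 hxb) (α.map_adj_iff.2 hxc)
    (α.injective.ne hab) (α.injective.ne hac) (α.injective.ne hbc)

end Automorphism

def extendArc (a₀ a₁ a₂ a₃ a₄ : ZMod 14) : ZMod 14 → ZMod 14 :=
  let a₅ := commonNbr a₀ a₄
  let a₁₀ := thirdNbr a₁ a₀ a₂
  let a₇ := thirdNbr a₂ a₁ a₃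
  let a₁₂ := thirdNbr a₃ a₂ a₄
  let a₆ := commonNbr a₅ a₇
  let a₁₁ := commonNbr a₁₀ a₁₂
  let a₁₃ := commonNbr a₁₂ a₀
  let a₉ := commonNbr a₄ a₁₀
  let a₈ := commonNbr a₇ a₁₃
  fun k ↦ (![a₀, a₁, a₂, a₃, a₄, a₅, a₆, a₇, a₈, a₉, a₁₀, a₁₁, a₁₂, a₁₃] : Fin 14 → ZMod 14) k

theorem apply_eq_extendArc (α : heawood ≃g heawood) (k : ZMod 14) :
    α k = extendArc (α 0) (α 1) (α 2) (α 3) (α 4) k := by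
  have h₅ := commonNbr_apply α (x := 0) (c := 5) (y := 4) (by decide) (by decide) (by decide)
  have h₁₀ := thirdNbr_apply α (x := 1) (a := 0) (b := 2) (c := 10)
    (by decide) (by decide) (by decide) (by decide) (by decide) (by decide)
  have h₇ := thirdNbr_apply α (x := 2) (a := 1) (b := 3) (c := 7)
    (by decide) (by decide) (by decide) (by decide) (by decide) (by decide)
  have h₁₂ := thirdNbr_apply α (x := 3) (a := 2) (b := 4) (c := 12)
    (by decide) (by decide) (by decide) (by decide) (by decide) (by decide)
  have h₆ := commonNbr_apply α (x := 5) (c := 6) (y := 7) (by decide) (by decide) (by decide)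
  have h₁₁ := commonNbr_apply α (x := 10) (c := 11) (y := 12) (by decide) (by decide) (by decide)
  have h₁₃ := commonNbr_apply α (x := 12) (c := 13) (y := 0) (by decide) (by decide) (by decide)
  have h₉ := commonNbr_apply α (x := 4) (c := 9) (y := 10) (by decide) (by decide) (by decide)
  have h₈ := commonNbr_apply α (x := 7) (c := 8) (y := 13) (by decide) (by decide) (by decide)
  fin_cases k <;> simp [extendArc, h₅, h₁₀, h₇, h₁₂, h₆, h₁₁, h₁₃, h₉, h₈] <;> rfl

-- quantifying over `nbrs` rather than over adjacent pairs keeps the kernel computation small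
set_option synthInstance.maxSize 100000 in
theorem card_fixed_extendArc : ∀ a₀ : ZMod 14, ∀ a₁ ∈ nbrs a₀, ∀ a₂ ∈ nbrs a₁, ∀ a₃ ∈ nbrs a₂,
    ∀ a₄ ∈ nbrs a₃, (∀ k, extendArc a₀ a₁ a₂ a₃ a₄ (extendArc a₀ a₁ a₂ a₃ a₄ k) = k) →
    (∃ k, extendArc a₀ a₁ a₂ a₃ a₄ k ≠ k) → (∃ k, extendArc a₀ a₁ a₂ a₃ a₄ k = k) →
    #{k | extendArc a₀ a₁ a₂ a₃ a₄ k = k} = 6 := by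
  decide +kernel

theorem card_fixed_eq_six (α : heawood ≃g heawood) (hinv : ∀ x, α (α x) = x)
    (hne : ∃ x, α x ≠ x) (hfix : ∃ x, α x = x) : #{x | α x = x} = 6 := by
  have hpath (i : ZMod 14) (hi : heawood.Adj i (i + 1)) : α (i + 1) ∈ nbrs (α i) :=
    (adj_iff_mem_nbrs _ _).1 (α.map_adj_iff.2 hi)
  have key := card_fixed_extendArc (α 0) (α 1) (hpath 0 (by decide)) (α 2) (hpath 1 (by decide))
    (α 3) (hpath 2 (by decide)) (α 4) (hpath 3 (by decide))
  rw [← funext (apply_eq_extendArc α)] at key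
  exact key hinv hne hfix

end Heawood

/-- If an automorphism of the Heawood graph has order 2 and setwise fixes some 12-cycle
or some 14-cycle, then it fixes no vertex. -/
theorem heawood_order_two_invariant_cycle_no_fixed_vertex (α : heawood ≃g heawood)
    (hα : orderOf α = 2)
    (h : ∃ s, (s ∈ cycleEdgeSets heawood 12 ∨ s ∈ cycleEdgeSets heawood 14) ∧
      s.image (Sym2.map ⇑α) = s) :
    ∀ v : ZMod 14, α v ≠ v := by
  intro v hv
  have hinv (x : ZMod 14) : α (α x) = x := by
    have hsq : α * α = 1 := by rw [← sq, ← hα, pow_orderOf_eq_one]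
    exact DFunLike.congr_fun hsq x
  have hne : ∃ x, α x ≠ x := by
    by_contra! hid
    rw [show α = 1 from RelIso.ext hid, orderOf_one] at hα
    exact absurd hα (by norm_num)
  have hsix := Heawood.card_fixed_eq_six α hinv hne ⟨v, hv⟩
  obtain ⟨s, hs, hαs⟩ := h
  obtain ⟨u, w, hw, hlen, rfl⟩ : ∃ u, ∃ w : heawood.Walk u u,
      w.IsCycle ∧ 12 ≤ w.length ∧ w.edges.toFinset = s := by
    rcases hs with ⟨u, w, hw, hl, hs⟩ | ⟨u, w, hw, hl, hs⟩ <;> exact ⟨u, w, hw, by omega, hs⟩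
  have hmap (e : Sym2 (ZMod 14)) (he : e ∈ w.edges) : e.map α ∈ w.edges := by
    rw [← List.mem_toFinset, ← hαs]
    exact mem_image_of_mem _ (List.mem_toFinset.2 he)
  have := hw.length_le_card_fixed α.injective hmap (by rw [ZMod.card, hsix]; omega)
  omega
end
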